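/- For q ∈ (0, 1/2), let ρ_q be the 2×2 density matrix [[1−q, √(q(1−q))],[√(q(1−q)), q]] with pinching Πρ_q = diag(1−q, q). Then D(ρ_q‖Πρ_q) / (q(1−q) · log((1−q)/q)) tends to 1 as q → 0⁺. -/

import Mathlib

open Matrix MeasureTheory
open scoped ComplexOrder

noncomputable section

/-- Matrix logarithm of a Hermitian matrix via functional calculus on its eigenvalues,
with the convention `log 0 = 0` (since `Real.log 0 = 0`); junk value `0` on
non-Hermitian matrices. -/
def mlog {m : Type*} [Fintype m] [DecidableEq m] (M : Matrix m m ℂ) : Matrix m m ℂ :=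
  open scoped Classical in
  if h : M.IsHermitian then
    (h.eigenvectorUnitary : Matrix m m ℂ) *
      Matrix.diagonal (fun i => (Real.log (h.eigenvalues i) : ℂ)) *
      (h.eigenvectorUnitary : Matrix m m ℂ)ᴴ
  else 0

/-- Umegaki quantum relative entropy `D(ρ‖σ) = Tr[ρ (log ρ − log σ)]`. -/
def relEnt {m : Type*} [Fintype m] [DecidableEq m] (ρ σ : Matrix m m ℂ) : ℝ :=
  ((ρ * (mlog ρ - mlog σ)).trace).re
/-- The pure-state family `ρ_q = [[1−q, √(q(1−q))],[√(q(1−q)), q]]`. -/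
def rhoq (q : ℝ) : Matrix (Fin 2) (Fin 2) ℂ :=
  !![((1 - q : ℝ) : ℂ), ((Real.sqrt (q * (1 - q)) : ℝ) : ℂ);
     ((Real.sqrt (q * (1 - q)) : ℝ) : ℂ), ((q : ℝ) : ℂ)]

/-- Its pinching `Πρ_q = diag(1−q, q)`. -/
def pinchq (q : ℝ) : Matrix (Fin 2) (Fin 2) ℂ :=
  Matrix.diagonal ![((1 - q : ℝ) : ℂ), ((q : ℝ) : ℂ)]

/-!
`ρ_q` is a rank-one projection, so its spectrum is `{0, 1}` and `log ρ_q = 0`; the pinching is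
diagonal with `log Πρ_q = diag(log (1 − q), log q)`. Hence `D(ρ_q‖Πρ_q) = −Tr[ρ_q log Πρ_q]` is the
binary entropy `h(q)`. As `q → 0⁺`, both `h(q)` and `q(1 − q) log((1 − q)/q)` are asymptotic to
`−q log q`, because `log (1 − q) = O(q)` is negligible against `q log q`.
-/

open Filter Topology Real

lemma cfc_eq_of_eqOn_affine {A : Type*} [Ring A] [StarRing A] [TopologicalSpace A]
    [Algebra ℝ A] [ContinuousFunctionalCalculus ℝ A IsSelfAdjoint] {a : A}
    (ha : IsSelfAdjoint a) {f : ℝ → ℝ} {r s : ℝ}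
    (hf : (spectrum ℝ a).EqOn f fun t => r * t + s) :
    cfc f a = r • a + algebraMap ℝ A s := by
  rw [cfc_congr hf, cfc_add .., cfc_const_mul .., cfc_id' .., cfc_const ..]

lemma exists_affine_eq_of_two_points (f : ℝ → ℝ) (x y : ℝ) :
    ∃ r s : ℝ, f x = r * x + s ∧ f y = r * y + s := by
  -- when `x = y` the slope is the junk value `0 / 0 = 0`, which still works
  refine ⟨(f x - f y) / (x - y), f y - (f x - f y) / (x - y) * y, ?_, by ring⟩
  rcases eq_or_ne x y with rfl | hxy
  · simp
  · field_simp [sub_ne_zero.mpr hxy]; ring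

section MatrixLog

variable {m : Type*} [Fintype m] [DecidableEq m]

lemma mlog_eq_cfc {M : Matrix m m ℂ} (hM : M.IsHermitian) : mlog M = cfc Real.log M := by
  rw [mlog, dif_pos hM, hM.cfc_eq, IsHermitian.cfc, Unitary.conjStarAlgAut_apply]
  rfl

lemma mlog_eq_zero_of_isIdempotentElem {P : Matrix m m ℂ} (hP : P.IsHermitian)
    (hPP : IsIdempotentElem P) : mlog P = 0 := by
  have hspec : spectrum ℝ P ⊆ {0, 1} := hPP.spectrum_subset ℝ
  rw [mlog_eq_cfc hP, cfc_congr (g := 0) fun t ht => ?_, cfc_zero]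
  rcases hspec ht with rfl | rfl <;> simp

end MatrixLog

lemma mlog_diagonal_fin_two (x y : ℝ) :
    mlog (diagonal ![(x : ℂ), (y : ℂ)]) = diagonal ![(Real.log x : ℂ), (Real.log y : ℂ)] := by
  have hD : (diagonal ![(x : ℂ), (y : ℂ)]).IsHermitian := by
    rw [IsHermitian, diagonal_conjTranspose]
    congr 1; ext i; fin_cases i <;> simp
  have hspec : spectrum ℝ (diagonal ![(x : ℂ), (y : ℂ)]) ⊆ {x, y} := by
    intro t ht
    rw [← spectrum.preimage_algebraMap ℂ, Set.mem_preimage, spectrum_diagonal] at ht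
    obtain ⟨i, hi⟩ := ht
    fin_cases i <;> simp_all [eq_comm]
  -- on the two-point spectrum `log` is affine, so `log D = r D + s`
  obtain ⟨r, s, hx, hy⟩ := exists_affine_eq_of_two_points Real.log x y
  rw [mlog_eq_cfc hD, cfc_eq_of_eqOn_affine (r := r) (s := s) hD fun t ht => ?_]
  · ext i j
    fin_cases i <;> fin_cases j <;> simp [hx, hy, Algebra.algebraMap_eq_smul_one]
  · rcases hspec ht with rfl | rfl <;> assumption

lemma rhoq_isHermitian (q : ℝ) : (rhoq q).IsHermitian := by
  ext i j
  fin_cases i <;> fin_cases j <;> simp [rhoq, conjTranspose_apply]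

lemma isIdempotentElem_rhoq {q : ℝ} (h0 : 0 ≤ q) (h1 : q ≤ 1) : IsIdempotentElem (rhoq q) := by
  have hsq : ((√(q * (1 - q)) : ℝ) : ℂ) * (√(q * (1 - q)) : ℝ) = q * (1 - q) := by
    exact_mod_cast Real.mul_self_sqrt (mul_nonneg h0 (sub_nonneg.mpr h1))
  unfold IsIdempotentElem
  ext i j
  fin_cases i <;> fin_cases j <;> simp [rhoq, mul_apply, Fin.sum_univ_two, hsq] <;> ring

lemma relEnt_rhoq_pinchq {q : ℝ} (h0 : 0 ≤ q) (h1 : q ≤ 1) :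
    relEnt (rhoq q) (pinchq q) = binEntropy q := by
  rw [relEnt, mlog_eq_zero_of_isIdempotentElem (rhoq_isHermitian q) (isIdempotentElem_rhoq h0 h1),
    pinchq, mlog_diagonal_fin_two, binEntropy_eq_negMulLog_add_negMulLog_one_sub, negMulLog,
    negMulLog]
  simp [rhoq, trace_fin_two, vecMul_diagonal]
  ring

lemma tendsto_one_sub_nhdsGT_zero : Tendsto (fun q : ℝ => 1 - q) (𝓝[>] 0) (𝓝 1) := by
  simpa using ((continuous_sub_left (1 : ℝ)).tendsto 0).mono_left nhdsWithin_le_nhds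

lemma tendsto_log_one_sub_div_self :
    Tendsto (fun q => Real.log (1 - q) / q) (𝓝[≠] 0) (𝓝 (-1)) := by
  have hd : HasDerivAt (fun q => Real.log (1 - q)) (-1) 0 := by
    simpa using ((hasDerivAt_id (0 : ℝ)).const_sub 1).log (by norm_num)
  simpa [div_eq_inv_mul] using hasDerivAt_iff_tendsto_slope_zero.mp hd

lemma tendsto_inv_log_nhdsGT_zero : Tendsto (fun q => (Real.log q)⁻¹) (𝓝[>] 0) (𝓝 0) :=
  tendsto_log_nhdsGT_zero.inv_tendsto_atBot

lemma tendsto_binEntropy_div_negMulLog :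
    Tendsto (fun q => binEntropy q / negMulLog q) (𝓝[>] 0) (𝓝 1) := by
  have hlim : Tendsto (fun q => 1 + (1 - q) * (Real.log (1 - q) / q) * (Real.log q)⁻¹)
      (𝓝[>] 0) (𝓝 1) := by
    simpa using ((tendsto_one_sub_nhdsGT_zero.mul (tendsto_log_one_sub_div_self.mono_left
      (nhdsGT_le_nhdsNE 0))).mul tendsto_inv_log_nhdsGT_zero).const_add 1
  refine hlim.congr' ?_
  filter_upwards [Ioo_mem_nhdsGT (zero_lt_one' ℝ)] with q ⟨hq0, hq1⟩
  have hlog : Real.log q ≠ 0 := (Real.log_neg hq0 hq1).ne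
  rw [binEntropy_eq_negMulLog_add_negMulLog_one_sub, negMulLog, negMulLog]
  field_simp
  ring

lemma tendsto_mul_log_div_div_negMulLog :
    Tendsto (fun q => q * (1 - q) * Real.log ((1 - q) / q) / negMulLog q) (𝓝[>] 0) (𝓝 1) := by
  have hlim : Tendsto (fun q => (1 - q) * (1 - Real.log (1 - q) * (Real.log q)⁻¹))
      (𝓝[>] 0) (𝓝 1) := by
    simpa using tendsto_one_sub_nhdsGT_zero.mul (tendsto_const_nhds.sub
      ((tendsto_one_sub_nhdsGT_zero.log one_ne_zero).mul tendsto_inv_log_nhdsGT_zero))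
  refine hlim.congr' ?_
  filter_upwards [Ioo_mem_nhdsGT (zero_lt_one' ℝ)] with q ⟨hq0, hq1⟩
  have hlog : Real.log q ≠ 0 := (Real.log_neg hq0 hq1).ne
  rw [Real.log_div (by linarith) hq0.ne', negMulLog]
  field_simp
  ring

lemma tendsto_binEntropy_div_mul_log :
    Tendsto (fun q => binEntropy q / (q * (1 - q) * Real.log ((1 - q) / q))) (𝓝[>] 0) (𝓝 1) := by
  have h := tendsto_binEntropy_div_negMulLog.div tendsto_mul_log_div_div_negMulLog one_ne_zero
  rw [div_one] at h
  refine h.congr' ?_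
  filter_upwards [Ioo_mem_nhdsGT (zero_lt_one' ℝ)] with q ⟨hq0, hq1⟩
  have hq : negMulLog q ≠ 0 := by
    rw [negMulLog, neg_mul]
    exact neg_ne_zero.mpr (mul_neg_of_pos_of_neg hq0 (Real.log_neg hq0 hq1)).ne
  exact div_div_div_cancel_right₀ hq _ _

/-- Logarithmic sharpness: `D(ρ_q‖Πρ_q) / (q(1−q) log((1−q)/q)) → 1` as `q → 0⁺`. -/
theorem two_level_log_sharpness :
    Filter.Tendsto
      (fun q : ℝ =>
        relEnt (rhoq q) (pinchq q) / (q * (1 - q) * Real.log ((1 - q) / q)))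
      (nhdsWithin 0 (Set.Ioi 0)) (nhds 1) := by
  refine tendsto_binEntropy_div_mul_log.congr' ?_
  filter_upwards [Ioo_mem_nhdsGT (zero_lt_one' ℝ)] with q ⟨hq0, hq1⟩
  rw [relEnt_rhoq_pinchq hq0.le hq1.le]
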